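/- For every fixed ρ > 0 there is a constant C > 0 such that for all σ ∈ (0,1): | ∫_{B_ρ^{N-1}} 𝒦_s((y',0), σ) dy' − σ^{−1/(2s)} ∫_{ℝ^{N-1}} P_s((y',0)) dy' | ≤ C σ. -/

import Mathlib

open MeasureTheory Metric Real Set

noncomputable section

/-- Append a last coordinate: `(y', a) ∈ ℝ^{N-1} × ℝ ↦ ℝ^N`. -/
def snocPt {d : ℕ} (y' : EuclideanSpace ℝ (Fin d)) (a : ℝ) :
    EuclideanSpace ℝ (Fin (d + 1)) :=
  (EuclideanSpace.equiv (Fin (d + 1)) ℝ).symm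
    (Fin.snoc ((EuclideanSpace.equiv (Fin d) ℝ) y') a)

/-- The last standard basis vector `e_N` of `ℝ^N`. -/
def eN (d : ℕ) : EuclideanSpace ℝ (Fin (d + 1)) :=
  EuclideanSpace.single (Fin.last d) 1

/-- `τ_E = 𝟙_E − 𝟙_{ℝ^N ∖ cl E}`. -/
def tauE {d : ℕ} (E : Set (EuclideanSpace ℝ (Fin (d + 1))))
    (y : EuclideanSpace ℝ (Fin (d + 1))) : ℝ :=
  Set.indicator E (fun _ => 1) y - Set.indicator (closure E)ᶜ (fun _ => 1) y

/-- The kernel `𝒦_s(x,t) = t^{-N/(2s)} P_s(t^{-1/(2s)} x)` with `N = d+1`. -/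
def ker {d : ℕ} (s : ℝ) (P : EuclideanSpace ℝ (Fin (d + 1)) → ℝ)
    (x : EuclideanSpace ℝ (Fin (d + 1))) (t : ℝ) : ℝ :=
  t ^ (-(((d : ℝ) + 1) / (2 * s))) * P ((t ^ (-(1 : ℝ) / (2 * s))) • x)

/-- `u(x,t) = ∫_{ℝ^N} 𝒦_s(x−y,t) τ_E(y) dy`. -/
def uF {d : ℕ} (s : ℝ) (P : EuclideanSpace ℝ (Fin (d + 1)) → ℝ)
    (E : Set (EuclideanSpace ℝ (Fin (d + 1)))) (x : EuclideanSpace ℝ (Fin (d + 1)))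
    (t : ℝ) : ℝ :=
  ∫ y, ker s P (x - y) t * tauE E y

/-!
Substituting `y' = σ^{1/(2s)} z` turns the integral over `B_ρ` into `σ^{-1/(2s)} ∫_{B_R} P(z,0) dz`
with `R = σ^{-1/(2s)} ρ`, so the difference is `-σ^{-1/(2s)}` times the tail
`∫_{|z|>R} P(z,0) dz`. The decay `P(y) ≲ |y|^{-p}`, `p = N + 2s`, and scaling bound the tail by
`𝒞 R^{N-1-p} ∫_{|z|>1} |z|^{-p} dz`, and `σ^{-1/(2s)} R^{N-1-p} = σ ρ^{-1-2s}` because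
`N - 1 - p = -1 - 2s`.
-/

lemma one_add_rpow_le_two_rpow_mul {p t : ℝ} (hp : 0 ≤ p) (ht : 0 ≤ t) :
    (1 + t) ^ p ≤ 2 ^ p * (1 + t ^ p) := by
  have h2p : 0 ≤ (2 : ℝ) ^ p := by positivity
  have htp : 0 ≤ t ^ p := by positivity
  rcases le_total t 1 with h | h
  · calc (1 + t) ^ p ≤ 2 ^ p := by gcongr; linarith
      _ ≤ 2 ^ p * (1 + t ^ p) := by nlinarith
  · calc (1 + t) ^ p ≤ (2 * t) ^ p := by gcongr; linarith
      _ = 2 ^ p * t ^ p := Real.mul_rpow zero_le_two ht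
      _ ≤ 2 ^ p * (1 + t ^ p) := by nlinarith

lemma div_one_add_rpow_le_mul_rpow_neg {C t p : ℝ} (hC : 0 ≤ C) (ht : 0 < t) :
    C / (1 + t ^ p) ≤ C * t ^ (-p) := by
  have htp : 0 < t ^ p := by positivity
  rw [Real.rpow_neg ht.le, ← div_eq_mul_inv]
  gcongr
  linarith

section DecayIntegrals

open Module Pointwise

variable {E : Type*} [NormedAddCommGroup E] [NormedSpace ℝ E] [FiniteDimensional ℝ E]
  [MeasurableSpace E] [BorelSpace E] {μ : Measure E} [μ.IsAddHaarMeasure] {p : ℝ}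

lemma integrable_of_norm_le_div_one_add_norm_rpow {f : E → ℝ} {C : ℝ}
    (hp : (finrank ℝ E : ℝ) < p) (hf : AEStronglyMeasurable f μ)
    (hfC : ∀ x, ‖f x‖ ≤ C / (1 + ‖x‖ ^ p)) : Integrable f μ := by
  have hp0 : 0 ≤ p := (Nat.cast_nonneg _).trans hp.le
  refine ((integrable_one_add_norm hp).const_mul (C * 2 ^ p)).mono' hf
    (Filter.Eventually.of_forall fun x => (hfC x).trans ?_)
  have hD : 0 < 1 + ‖x‖ ^ p := by positivity
  have hC : 0 ≤ C := by
    simpa [hD.ne'] using mul_nonneg ((norm_nonneg _).trans (hfC x)) hD.le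
  rw [Real.rpow_neg (by positivity), mul_assoc, ← div_eq_mul_inv, div_eq_mul_inv C]
  gcongr
  rw [le_div_iff₀ (by positivity), inv_mul_le_iff₀ hD, mul_comm]
  exact one_add_rpow_le_two_rpow_mul hp0 (norm_nonneg x)

lemma integrableOn_compl_ball_norm_rpow_neg (hp : (finrank ℝ E : ℝ) < p) {r : ℝ} (hr : 0 < r) :
    IntegrableOn (fun x : E => ‖x‖ ^ (-p)) (ball 0 r)ᶜ μ := by
  have hp0 : 0 ≤ p := (Nat.cast_nonneg _).trans hp.le
  refine ((integrable_one_add_norm hp).const_mul ((1 + r⁻¹) ^ p)).integrableOn.mono'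
    (measurable_norm.pow_const _).aestronglyMeasurable
    ((ae_restrict_iff' measurableSet_ball.compl).2 <| .of_forall fun x hx => ?_)
  have hrx : r ≤ ‖x‖ := by simpa using hx
  have hx0 : 0 < ‖x‖ := hr.trans_le hrx
  have key : (1 + ‖x‖) ^ p ≤ (1 + r⁻¹) ^ p * ‖x‖ ^ p := by
    rw [← Real.mul_rpow (by positivity) hx0.le]
    gcongr
    have : 1 ≤ r⁻¹ * ‖x‖ := by rwa [inv_mul_eq_div, one_le_div hr]
    linarith
  rw [Real.norm_of_nonneg (by positivity), Real.rpow_neg hx0.le, Real.rpow_neg (by positivity),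
    ← div_eq_mul_inv, le_div_iff₀ (by positivity), inv_mul_le_iff₀ (by positivity), mul_comm]
  exact key

lemma setIntegral_compl_ball_norm_rpow_neg {R : ℝ} (hR : 0 < R) :
    ∫ x in (ball (0 : E) R)ᶜ, ‖x‖ ^ (-p) ∂μ =
      R ^ ((finrank ℝ E : ℝ) - p) * ∫ x in (ball (0 : E) 1)ᶜ, ‖x‖ ^ (-p) ∂μ := by
  have hset : R • (ball (0 : E) 1)ᶜ = (ball 0 R)ᶜ := by
    rw [← smul_unitBall_of_pos hR]
    simpa only [Set.image_smul] using Set.image_compl_eq (MulAction.bijective₀ (α := E) hR.ne')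
  have h := Measure.setIntegral_comp_smul_of_pos μ (fun x : E => ‖x‖ ^ (-p)) (ball 0 1)ᶜ hR
  simp only [norm_smul, Real.norm_of_nonneg hR.le, Real.mul_rpow hR.le (norm_nonneg _),
    integral_const_mul, hset, smul_eq_mul] at h
  rw [eq_inv_mul_iff_mul_eq₀ (by positivity)] at h
  rw [← h, Real.rpow_sub hR, Real.rpow_natCast, Real.rpow_neg hR.le]
  ring

lemma setIntegral_compl_ball_le_of_le_mul_norm_rpow_neg (hp : (finrank ℝ E : ℝ) < p)
    {f : E → ℝ} {C R : ℝ} (hR : 0 < R) (hf0 : ∀ x, 0 ≤ f x)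
    (hfC : ∀ x ∈ (ball (0 : E) R)ᶜ, f x ≤ C * ‖x‖ ^ (-p)) :
    ∫ x in (ball 0 R)ᶜ, f x ∂μ ≤
      C * R ^ ((finrank ℝ E : ℝ) - p) * ∫ x in (ball (0 : E) 1)ᶜ, ‖x‖ ^ (-p) ∂μ := by
  calc ∫ x in (ball 0 R)ᶜ, f x ∂μ ≤ ∫ x in (ball 0 R)ᶜ, C * ‖x‖ ^ (-p) ∂μ :=
        integral_mono_of_nonneg (.of_forall hf0)
          ((integrableOn_compl_ball_norm_rpow_neg hp hR).const_mul C)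
          ((ae_restrict_iff' measurableSet_ball.compl).2 (.of_forall hfC))
    _ = _ := by rw [integral_const_mul, setIntegral_compl_ball_norm_rpow_neg hR, mul_assoc]

lemma abs_setIntegral_ball_sub_integral_le (hp : (finrank ℝ E : ℝ) < p) {f : E → ℝ} {C R : ℝ}
    (hR : 0 < R) (hf : AEStronglyMeasurable f μ) (hf0 : ∀ x, 0 ≤ f x)
    (hfC : ∀ x, f x ≤ C / (1 + ‖x‖ ^ p)) :
    |∫ x in ball 0 R, f x ∂μ - ∫ x, f x ∂μ| ≤
      C * R ^ ((finrank ℝ E : ℝ) - p) * ∫ x in (ball (0 : E) 1)ᶜ, ‖x‖ ^ (-p) ∂μ := by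
  have hC : 0 ≤ C := by
    simpa [Real.zero_rpow ((Nat.cast_nonneg _).trans_lt hp).ne'] using (hf0 0).trans (hfC 0)
  have hfi : Integrable f μ := integrable_of_norm_le_div_one_add_norm_rpow hp hf
    fun x => (Real.norm_of_nonneg (hf0 x)).trans_le (hfC x)
  rw [← integral_add_compl measurableSet_ball hfi, sub_add_cancel_left, abs_neg,
    abs_of_nonneg (setIntegral_nonneg measurableSet_ball.compl fun x _ => hf0 x)]
  refine setIntegral_compl_ball_le_of_le_mul_norm_rpow_neg hp hR hf0 fun x hx =>
    (hfC x).trans (div_one_add_rpow_le_mul_rpow_neg hC (hR.trans_le ?_))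
  simpa using hx

end DecayIntegrals

section Kernel

variable {d : ℕ}

lemma snocPt_apply (y' : EuclideanSpace ℝ (Fin d)) (a : ℝ) (i : Fin (d + 1)) :
    snocPt y' a i = Fin.snoc (α := fun _ => ℝ) (fun j => y' j) a i := rfl

lemma continuous_snocPt (a : ℝ) : Continuous fun y' : EuclideanSpace ℝ (Fin d) => snocPt y' a := by
  unfold snocPt
  fun_prop

lemma snocPt_smul (r : ℝ) (y' : EuclideanSpace ℝ (Fin d)) (a : ℝ) :
    snocPt (r • y') (r * a) = r • snocPt y' a := by
  ext i
  induction i using Fin.lastCases <;> simp [snocPt_apply]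

lemma norm_snocPt_zero (y' : EuclideanSpace ℝ (Fin d)) : ‖snocPt y' 0‖ = ‖y'‖ := by
  simp [EuclideanSpace.norm_eq, Fin.sum_univ_castSucc, snocPt_apply]

lemma ker_eq_rpow_mul (s : ℝ) (P : EuclideanSpace ℝ (Fin (d + 1)) → ℝ)
    (x : EuclideanSpace ℝ (Fin (d + 1))) {t : ℝ} (ht : 0 ≤ t) :
    ker s P x t = (t ^ (-(1 / (2 * s)))) ^ (d + 1) * P (t ^ (-(1 / (2 * s))) • x) := by
  rw [ker, ← Real.rpow_natCast, ← Real.rpow_mul ht, neg_div]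
  push_cast
  ring_nf

lemma setIntegral_ball_ker_snocPt (s : ℝ) (P : EuclideanSpace ℝ (Fin (d + 1)) → ℝ)
    {σ : ℝ} (hσ : 0 < σ) (ρ : ℝ) :
    ∫ y' in ball (0 : EuclideanSpace ℝ (Fin d)) ρ, ker s P (snocPt y' 0) σ =
      σ ^ (-(1 / (2 * s))) *
        ∫ z in ball (0 : EuclideanSpace ℝ (Fin d)) (σ ^ (-(1 / (2 * s))) * ρ), P (snocPt z 0) := by
  simp_rw [ker_eq_rpow_mul s P _ hσ.le]
  set c := σ ^ (-(1 / (2 * s)))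
  have hc : 0 < c := by positivity
  have hsmul (y' : EuclideanSpace ℝ (Fin d)) : c • snocPt y' 0 = snocPt (c • y') 0 := by
    simpa using (snocPt_smul c y' 0).symm
  simp_rw [hsmul]
  rw [integral_const_mul, Measure.setIntegral_comp_smul_of_pos volume
    (fun z => P (snocPt z 0)) _ hc, _root_.smul_ball hc.ne', smul_zero, Real.norm_of_nonneg hc.le,
    finrank_euclideanSpace_fin, smul_eq_mul, ← mul_assoc, pow_succ', mul_inv_cancel_right₀]
  positivity

end Kernel

theorem stmt8_general
    (d : ℕ) (s : ℝ) (hs : s ∈ Set.Ioo (0 : ℝ) 1)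
    (P : EuclideanSpace ℝ (Fin (d + 1)) → ℝ)
    (hP1 : ContDiff ℝ 1 P)
    (𝒞 : ℝ) (h𝒞 : 1 ≤ 𝒞)
    (hPlow : ∀ y, 𝒞⁻¹ / (1 + ‖y‖ ^ ((d : ℝ) + 1 + 2 * s)) ≤ P y)
    (hPup : ∀ y, P y ≤ 𝒞 / (1 + ‖y‖ ^ ((d : ℝ) + 1 + 2 * s))) :
    ∀ ρ > (0 : ℝ), ∃ C > (0 : ℝ), ∀ σ ∈ Set.Ioo (0 : ℝ) 1,
      |(∫ y' in ball (0 : EuclideanSpace ℝ (Fin d)) ρ, ker s P (snocPt y' 0) σ) -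
          σ ^ (-(1 / (2 * s))) * ∫ y' : EuclideanSpace ℝ (Fin d), P (snocPt y' 0)| ≤
        C * σ := by
  intro ρ hρ
  set p : ℝ := (d : ℝ) + 1 + 2 * s
  have hp : (Module.finrank ℝ (EuclideanSpace ℝ (Fin d)) : ℝ) < p := by
    rw [finrank_euclideanSpace_fin]; linarith [hs.1]
  have hP0 (y : EuclideanSpace ℝ (Fin (d + 1))) : 0 ≤ P y :=
    (div_nonneg (inv_nonneg.2 (zero_le_one.trans h𝒞)) (by positivity)).trans (hPlow y)
  set J := ∫ z in (ball (0 : EuclideanSpace ℝ (Fin d)) 1)ᶜ, ‖z‖ ^ (-p)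
  have hJ : 0 ≤ J := setIntegral_nonneg measurableSet_ball.compl fun z _ => by positivity
  refine ⟨𝒞 * ρ ^ ((d : ℝ) - p) * J + 1, by positivity, ?_⟩
  rintro σ ⟨hσ, -⟩
  set c := σ ^ (-(1 / (2 * s)))
  have hc : 0 < c := by positivity
  have htail := abs_setIntegral_ball_sub_integral_le (μ := volume)
    (f := fun z => P (snocPt z 0)) hp (mul_pos hc hρ)
    (hP1.continuous.comp (continuous_snocPt 0)).aestronglyMeasurable (fun z => hP0 _)
    fun z => by simpa [norm_snocPt_zero] using hPup (snocPt z 0)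
  rw [finrank_euclideanSpace_fin] at htail
  have hscale : c * (c * ρ) ^ ((d : ℝ) - p) = σ * ρ ^ ((d : ℝ) - p) := by
    have hexp : -(1 / (2 * s)) * (1 + ((d : ℝ) - p)) = 1 := by
      simp only [p]; field_simp [hs.1.ne']; ring
    rw [Real.mul_rpow hc.le hρ.le, ← mul_assoc, ← Real.rpow_one_add' hc.le (by linarith [hs.1]),
      ← Real.rpow_mul hσ.le, hexp, Real.rpow_one]
  rw [setIntegral_ball_ker_snocPt s P hσ, ← mul_sub, abs_mul, abs_of_pos hc]
  calc c * |_| ≤ c * (𝒞 * (c * ρ) ^ ((d : ℝ) - p) * J) := by gcongr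
    _ = 𝒞 * ρ ^ ((d : ℝ) - p) * J * σ := by linear_combination 𝒞 * J * hscale
    _ ≤ (𝒞 * ρ ^ ((d : ℝ) - p) * J + 1) * σ := by linarith

/-- for each fixed `ρ > 0`,
`|∫_{B_ρ^{N-1}} 𝒦_s((y',0),σ) dy' − σ^{−1/(2s)} ∫_{ℝ^{N-1}} P_s((y',0)) dy'| ≤ C σ`
for all `σ ∈ (0,1)`. -/
theorem stmt8
    (d : ℕ) (hd : 1 ≤ d) (s : ℝ) (hs : s ∈ Set.Ioo (0 : ℝ) 1)
    (P : EuclideanSpace ℝ (Fin (d + 1)) → ℝ)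
    (hPrad : ∀ x y, ‖x‖ = ‖y‖ → P x = P y)
    (hP1 : ContDiff ℝ 1 P)
    (𝒞 : ℝ) (h𝒞 : 1 ≤ 𝒞)
    (hPlow : ∀ y, 𝒞⁻¹ / (1 + ‖y‖ ^ ((d : ℝ) + 1 + 2 * s)) ≤ P y)
    (hPup : ∀ y, P y ≤ 𝒞 / (1 + ‖y‖ ^ ((d : ℝ) + 1 + 2 * s))) :
    ∀ ρ > (0 : ℝ), ∃ C > (0 : ℝ), ∀ σ ∈ Set.Ioo (0 : ℝ) 1,
      |(∫ y' in ball (0 : EuclideanSpace ℝ (Fin d)) ρ, ker s P (snocPt y' 0) σ) -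
          σ ^ (-(1 / (2 * s))) * ∫ y' : EuclideanSpace ℝ (Fin d), P (snocPt y' 0)| ≤
        C * σ :=
  stmt8_general d s hs P hP1 𝒞 h𝒞 hPlow hPup
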